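/- arXiv:1610.07165 — 5 statements merged into one kernel-verified Lean document; each statement's English description precedes it below -/
import Mathlib

section
/- Let $n \geq 2$ and $0 < \varepsilon < 1$. Define $R_{i\bar j k\bar\ell} = -\delta_{ij}\delta_{k\ell} + (2-\varepsilon)\delta_{i\ell}\delta_{kj}$ for $i,j,k,\ell \in \{1,\dots,n\}$. Then: (1) for every unit vector $v \in \mathbb{C}^n$, the holomorphic sectional curvature $H(v) = \sum_{i,j,k,\ell} R_{i\bar j k\bar\ell} v_i \bar v_j v_k \bar v_\ell = 1-\varepsilon > 0$; (2) taking $a_1 = \cdots = a_n = 1/\sqrt{n}$ and the standard unitary frame, the real bisectional curvature $B = \sum_{i,j} R_{i\bar i j\bar j} a_i a_j = -n + 2 - \varepsilon < 0$. -/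
/-!
At the origin the curvature is `-δ_{ij}δ_{kl} + c δ_{il}δ_{kj}` with `c = 2 - ε`. Contracting it
against `v ⊗ v̄ ⊗ v ⊗ v̄` gives `(c - 1)|v|⁴`, while the real bisectional contraction against `a ⊗ a`
gives `c|a|² - (∑ aᵢ)²`; the second term is of size `n` for the balanced vector `aᵢ = 1/√n`,
so it wins for `n ≥ 2` although `c - 1 = 1 - ε > 0`.
-/

open Finset

section ModelCurvature

variable {α ι : Type*} [CommRing α] [Fintype ι] [DecidableEq ι]

def modelCurvature (c : α) (i j k l : ι) : α :=
  -((if i = j then 1 else 0) * (if k = l then 1 else 0))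
    + c * (if i = l then 1 else 0) * (if k = j then 1 else 0)

theorem sum_modelCurvature_mul (c : α) (v w : ι → α) :
    ∑ i, ∑ j, ∑ k, ∑ l, modelCurvature c i j k l * v i * w j * v k * w l
      = (c - 1) * (∑ i, v i * w i) ^ 2 := by
  simp only [modelCurvature, add_mul, neg_mul, ite_mul, mul_ite, one_mul, mul_one, zero_mul,
    mul_zero, sum_add_distrib, sum_neg_distrib, sum_ite_irrel, sum_ite_eq, sum_ite_eq', mem_univ,
    if_true, sum_const_zero]
  rw [sq, sum_mul_sum, mul_sum]
  simp only [mul_sum, ← sum_neg_distrib, ← sum_add_distrib]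
  exact sum_congr rfl fun _ _ => sum_congr rfl fun _ _ => by ring

theorem sum_modelCurvature_diag (c : α) (a : ι → α) :
    ∑ i, ∑ j, modelCurvature c i i j j * a i * a j = c * ∑ i, a i ^ 2 - (∑ i, a i) ^ 2 := by
  simp only [modelCurvature, add_mul, neg_mul, ite_mul, mul_ite, one_mul, mul_one, zero_mul,
    mul_zero, sum_add_distrib, sum_neg_distrib, sum_ite_eq', mem_univ, if_true]
  rw [sq, sum_mul_sum, mul_sum]
  simp_rw [sq, mul_assoc]
  ring

end ModelCurvature

theorem sum_mul_conj_eq_one {ι : Type*} [Fintype ι] {v : ι → ℂ} (hv : ∑ i, ‖v i‖ ^ 2 = 1) :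
    ∑ i, v i * (starRingEnd ℂ) (v i) = 1 := by
  simp only [Complex.mul_conj', ← Complex.ofReal_pow, ← Complex.ofReal_sum, hv,
    Complex.ofReal_one]

section BalancedVector

variable {n : ℕ} {a : Fin n → ℝ}

theorem sum_sq_of_forall_eq_inv_sqrt (hn : n ≠ 0) (ha : ∀ i, a i = 1 / Real.sqrt n) :
    ∑ i, a i ^ 2 = 1 := by
  simp only [ha, sum_const, card_univ, Fintype.card_fin, nsmul_eq_mul, div_pow,
    Real.sq_sqrt (Nat.cast_nonneg n)]
  field_simp

theorem sq_sum_of_forall_eq_inv_sqrt (ha : ∀ i, a i = 1 / Real.sqrt n) :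
    (∑ i, a i) ^ 2 = n := by
  simp only [ha, sum_const, card_univ, Fintype.card_fin, nsmul_eq_mul, mul_pow, div_pow,
    Real.sq_sqrt (Nat.cast_nonneg n)]
  rcases eq_or_ne n 0 with rfl | hn
  · simp
  · field_simp

end BalancedVector

open Finset in
theorem example_2_2_curvature (n : ℕ) (hn : 2 ≤ n) (ε : ℝ) (hε0 : 0 < ε) (hε1 : ε < 1)
    (R : Fin n → Fin n → Fin n → Fin n → ℂ)
    (hR : ∀ i j k l : Fin n, R i j k l =
      -((if i = j then 1 else 0) * (if k = l then 1 else 0))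
      + (2 - (ε : ℂ)) * (if i = l then 1 else 0) * (if k = j then 1 else 0)) :
    (∀ v : Fin n → ℂ, ∑ i, ‖v i‖ ^ 2 = 1 →
      ∑ i, ∑ j, ∑ k, ∑ l, R i j k l * v i * (starRingEnd ℂ) (v j) * v k * (starRingEnd ℂ) (v l)
        = ((1 - ε : ℝ) : ℂ) ∧ (0 : ℝ) < 1 - ε) ∧
    (∀ a : Fin n → ℝ, (∀ i, a i = 1 / Real.sqrt n) →
      (∑ i, ∑ j, R i i j j * (a i : ℂ) * (a j : ℂ)) = ((-(n : ℝ) + 2 - ε : ℝ) : ℂ)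
        ∧ (-(n : ℝ) + 2 - ε : ℝ) < 0) := by
  obtain rfl : R = modelCurvature (2 - (ε : ℂ)) := by
    funext i j k l; exact hR i j k l
  have hn' : (2 : ℝ) ≤ n := by exact_mod_cast hn
  refine ⟨fun v hv => ⟨?_, by linarith⟩, fun a ha => ⟨?_, by linarith⟩⟩
  · rw [sum_modelCurvature_mul, sum_mul_conj_eq_one hv]
    push_cast
    ring
  · rw [sum_modelCurvature_diag]
    simp only [← Complex.ofReal_pow, ← Complex.ofReal_sum, sq_sum_of_forall_eq_inv_sqrt ha,
      sum_sq_of_forall_eq_inv_sqrt (by omega) ha]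
    push_cast
    ring
end

section
/- Let $b > 0$ and define the curvature array on $\{1,2\}^4$ by $R_{1\bar 1 1\bar 1} = R_{2\bar 2 2\bar 2} = 1$, $R_{1\bar 1 2\bar 2} = R_{1\bar 2 2\bar 1} = R_{2\bar 1 1\bar 2} = -1-b$, $R_{2\bar 2 1\bar 1} = 1+4b$, and all other components zero. Then for every nonzero positive semidefinite Hermitian $2\times 2$ matrix $\xi$ (with entries $\xi_{11}=x$, $\xi_{22}=y$, $\xi_{12}=t$, $\xi_{21}=\bar t$), one has $\sum_{i,j,k,\ell} R_{i\bar j k\bar\ell}\,\xi_{ij}\xi_{k\ell} = x^2 + y^2 + 3bxy - 2(1+b)|t|^2 > 0$. -/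
/-!
The sum collapses to `x² + y² + 3bxy - 2(1+b)|t|²`. Positive semidefiniteness gives `x, y ≥ 0` and,
through `det ξ ≥ 0`, `|t|² ≤ xy`, so the form is at least `(x - y)² + bxy`; this vanishes only when
`x = y = 0`, which would make the trace of `ξ`, hence `ξ` itself, zero.
-/

namespace Matrix

open RCLike
open scoped ComplexOrder

variable {𝕜 : Type*} [RCLike 𝕜] {A : Matrix (Fin 2) (Fin 2) 𝕜}

lemma IsHermitian.apply_zero_one_mul_apply_one_zero (hA : A.IsHermitian) :
    A 0 1 * A 1 0 = (‖A 0 1‖ : 𝕜) ^ 2 := by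
  rw [← hA.apply 1 0]
  exact RCLike.mul_conj _

namespace PosSemidef

lemma re_diag_nonneg {n : Type*} {B : Matrix n n 𝕜} (hB : B.PosSemidef) (i : n) :
    0 ≤ re (B i i) :=
  (RCLike.nonneg_iff.mp hB.diag_nonneg).1

lemma norm_sq_apply_zero_one_le (hA : A.PosSemidef) :
    ‖A 0 1‖ ^ 2 ≤ re (A 0 0) * re (A 1 1) := by
  have hdet := hA.det_nonneg
  rw [det_fin_two, hA.1.apply_zero_one_mul_apply_one_zero, ← hA.1.coe_re_apply_self 0,
    ← hA.1.coe_re_apply_self 1, ← ofReal_mul, ← ofReal_pow, ← ofReal_sub, ofReal_nonneg] at hdet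
  linarith

lemma re_add_re_pos (hA : A.PosSemidef) (hA0 : A ≠ 0) : 0 < re (A 0 0) + re (A 1 1) := by
  have htrace : 0 < A.trace :=
    hA.trace_nonneg.lt_of_ne (Ne.symm (hA.trace_eq_zero_iff.not.mpr hA0))
  rw [trace_fin_two] at htrace
  simpa using (RCLike.pos_iff.mp htrace).1

end PosSemidef

end Matrix

lemma sq_add_sq_add_mul_sub_pos {b x y T : ℝ} (hb : 0 < b) (hx : 0 ≤ x) (hy : 0 ≤ y)
    (hxy : 0 < x + y) (hT : T ≤ x * y) : 0 < x ^ 2 + y ^ 2 + 3 * b * x * y - 2 * (1 + b) * T := by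
  rcases (mul_nonneg hx hy).eq_or_lt with hxy0 | hxy0
  · nlinarith
  · nlinarith [sq_nonneg (x - y)]

def exampleCurvature (b : ℝ) (i j k l : Fin 2) : ℝ :=
  if (i, j, k, l) = (0, 0, 0, 0) then 1
  else if (i, j, k, l) = (1, 1, 1, 1) then 1
  else if (i, j, k, l) = (0, 0, 1, 1) then -1 - b
  else if (i, j, k, l) = (0, 1, 1, 0) then -1 - b
  else if (i, j, k, l) = (1, 0, 0, 1) then -1 - b
  else if (i, j, k, l) = (1, 1, 0, 0) then 1 + 4 * b
  else 0

lemma sum_exampleCurvature_mul (b : ℝ) (ξ : Matrix (Fin 2) (Fin 2) ℂ) :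
    ∑ i, ∑ j, ∑ k, ∑ l, (exampleCurvature b i j k l : ℂ) * ξ i j * ξ k l =
      ξ 0 0 ^ 2 + ξ 1 1 ^ 2 + 3 * b * ξ 0 0 * ξ 1 1 - 2 * (1 + b) * (ξ 0 1 * ξ 1 0) := by
  simp only [exampleCurvature, Fin.isValue, Prod.mk.injEq, Fin.sum_univ_two, and_true, zero_ne_one,
    and_false, ↓reduceIte, one_ne_zero, Complex.ofReal_zero, zero_mul, zero_add, add_zero,
    Complex.ofReal_one, one_mul, Complex.ofReal_sub, Complex.ofReal_neg, Complex.ofReal_add,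
    Complex.ofReal_mul, Complex.ofReal_ofNat]
  ring

open Finset in
open scoped ComplexOrder in
theorem example_positive_rbc (b : ℝ) (hb : 0 < b)
    (R : Fin 2 → Fin 2 → Fin 2 → Fin 2 → ℂ)
    (hR : ∀ i j k l : Fin 2, R i j k l =
      if (i, j, k, l) = (0, 0, 0, 0) then 1
      else if (i, j, k, l) = (1, 1, 1, 1) then 1
      else if (i, j, k, l) = (0, 0, 1, 1) then -1 - b
      else if (i, j, k, l) = (0, 1, 1, 0) then -1 - b
      else if (i, j, k, l) = (1, 0, 0, 1) then -1 - b
      else if (i, j, k, l) = (1, 1, 0, 0) then 1 + 4 * b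
      else 0) :
    ∀ ξ : Matrix (Fin 2) (Fin 2) ℂ, ξ.PosSemidef → ξ ≠ 0 →
      (∑ i, ∑ j, ∑ k, ∑ l, R i j k l * ξ i j * ξ k l) =
        (((ξ 0 0).re ^ 2 + (ξ 1 1).re ^ 2 + 3 * b * (ξ 0 0).re * (ξ 1 1).re
          - 2 * (1 + b) * ‖ξ 0 1‖ ^ 2 : ℝ) : ℂ) ∧
      (0 : ℝ) < (ξ 0 0).re ^ 2 + (ξ 1 1).re ^ 2 + 3 * b * (ξ 0 0).re * (ξ 1 1).re
          - 2 * (1 + b) * ‖ξ 0 1‖ ^ 2 := by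
  intro ξ hξ hξ0
  have hRξ : R = fun i j k l ↦ (exampleCurvature b i j k l : ℂ) := by
    ext i j k l
    exact hR i j k l
  refine ⟨?_, sq_add_sq_add_mul_sub_pos hb (hξ.re_diag_nonneg 0) (hξ.re_diag_nonneg 1)
    (hξ.re_add_re_pos hξ0) hξ.norm_sq_apply_zero_one_le⟩
  have hdiag : ∀ i, ((ξ i i).re : ℂ) = ξ i i := hξ.1.coe_re_apply_self
  have hoff : ξ 0 1 * ξ 1 0 = (‖ξ 0 1‖ : ℂ) ^ 2 := hξ.1.apply_zero_one_mul_apply_one_zero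
  rw [hRξ, sum_exampleCurvature_mul, hoff]
  push_cast
  rw [hdiag 0, hdiag 1]
end

section
/- Let $n \geq 1$, $c \in \mathbb{R}$, and let $R : \{1,\dots,n\}^4 \to \mathbb{C}$ satisfy the Hermitian symmetry $R_{i\bar j k\bar\ell} = \overline{R_{j\bar i \ell\bar k}}$ and the constant-curvature identity $R_{i\bar j k\bar\ell} + R_{k\bar\ell i\bar j} = 2c\,\delta_{i\ell}\delta_{kj}$ for all indices. Suppose moreover that $\sum_k (R_{i\bar j k\bar k} - R_{k\bar j i \bar k}) = 0$ for all $i,j$ (vanishing of the Gauduchon form derivative term). If $c = 0$, then $\sum_k R_{i\bar j k\bar k} = -\overline{\sum_k R_{j\bar i k\bar k}}$ and consequently $\mathrm{Ric}^{(1)}_{i\bar j} := \sum_k R_{i\bar j k\bar k} = 0$, $\mathrm{Ric}^{(2)}_{i\bar j} := \sum_k R_{k\bar k i\bar j} = 0$, and $\mathrm{Ric}^{(3)}_{i\bar j} := \sum_k R_{i\bar k k\bar j} = 0$ for all $i,j$. -/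
/-!
With `c = 0` the constant-curvature identity says that `R` is skew under swapping its two index
pairs. Skewness and the Gauduchon condition turn `Ric⁽¹⁾_{i j̄} = ∑ R_{k j̄ i k̄}` into the negative
conjugate of `Ric⁽¹⁾_{j ī}`, while Hermitian symmetry makes it the conjugate itself; hence
`Ric⁽¹⁾ = 0`. Skewness, together with the Gauduchon condition for `Ric⁽³⁾`, expresses `Ric⁽²⁾`
and `Ric⁽³⁾` as `-Ric⁽¹⁾`.
-/

open Finset ComplexConjugate

namespace CurvatureTensor

variable {ι K : Type*} [Fintype ι] [CommRing K] (R : ι → ι → ι → ι → K)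

def ricci₁ (i j : ι) : K := ∑ k, R i j k k

def ricci₂ (i j : ι) : K := ∑ k, R k k i j

def ricci₃ (i j : ι) : K := ∑ k, R i k k j

variable {R}

theorem ricci₂_eq_neg_ricci₁ (hskew : ∀ i j k l, R i j k l = -R k l i j) (i j : ι) :
    ricci₂ R i j = -ricci₁ R i j := by
  rw [ricci₂, ricci₁, ← sum_neg_distrib]
  exact sum_congr rfl fun k _ => hskew k k i j

theorem ricci₃_eq_neg (hskew : ∀ i j k l, R i j k l = -R k l i j) (i j : ι) :
    ricci₃ R i j = -∑ k, R k j i k := by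
  rw [ricci₃, ← sum_neg_distrib]
  exact sum_congr rfl fun k _ => hskew i k k j

variable [StarRing K]

theorem ricci₁_eq_conj (hherm : ∀ i j k l, R i j k l = conj (R j i l k)) (i j : ι) :
    ricci₁ R i j = conj (ricci₁ R j i) := by
  rw [ricci₁, ricci₁, map_sum]
  exact sum_congr rfl fun k _ => hherm i j k k

theorem ricci₁_eq_neg_conj (hherm : ∀ i j k l, R i j k l = conj (R j i l k))
    (hskew : ∀ i j k l, R i j k l = -R k l i j)
    (hgauduchon : ∀ i j, ricci₁ R i j = ∑ k, R k j i k) (i j : ι) :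
    ricci₁ R i j = -conj (ricci₁ R j i) :=
  calc ricci₁ R i j = ∑ k, R k j i k := hgauduchon i j
    _ = ∑ k, conj (-R k i j k) := sum_congr rfl fun k _ => by rw [hherm, hskew j]
    _ = -conj (ricci₁ R j i) := by rw [hgauduchon, map_sum, ← sum_neg_distrib]; simp

theorem ricci₁_eq_zero [NoZeroDivisors K] [CharZero K]
    (hherm : ∀ i j k l, R i j k l = conj (R j i l k))
    (hskew : ∀ i j k l, R i j k l = -R k l i j)
    (hgauduchon : ∀ i j, ricci₁ R i j = ∑ k, R k j i k) (i j : ι) :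
    ricci₁ R i j = 0 := by
  rw [← CharZero.eq_neg_self_iff]
  nth_rw 2 [ricci₁_eq_conj hherm]
  exact ricci₁_eq_neg_conj hherm hskew hgauduchon i j

end CurvatureTensor

open CurvatureTensor

open Finset in
theorem vanishing_ricci_of_zero_rbc_general (n : ℕ) (c : ℝ)
    (R : Fin n → Fin n → Fin n → Fin n → ℂ)
    (hherm : ∀ i j k l : Fin n, R i j k l = (starRingEnd ℂ) (R j i l k))
    (hconst : ∀ i j k l : Fin n, R i j k l + R k l i j =
      2 * (c : ℂ) * (if i = l then 1 else 0) * (if k = j then 1 else 0))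
    (hgauduchon : ∀ i j : Fin n, ∑ k, (R i j k k - R k j i k) = 0)
    (hc : c = 0) :
    (∀ i j : Fin n, ∑ k, R i j k k = -(starRingEnd ℂ) (∑ k, R j i k k)) ∧
    (∀ i j : Fin n, ∑ k, R i j k k = 0) ∧
    (∀ i j : Fin n, ∑ k, R k k i j = 0) ∧
    (∀ i j : Fin n, ∑ k, R i k k j = 0) := by
  have hskew : ∀ i j k l, R i j k l = -R k l i j := fun i j k l =>
    eq_neg_of_add_eq_zero_left (by simpa [hc] using hconst i j k l)
  have hgau : ∀ i j, ricci₁ R i j = ∑ k, R k j i k := fun i j =>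
    sub_eq_zero.mp (by rw [ricci₁, ← sum_sub_distrib]; exact hgauduchon i j)
  have hric₁ := ricci₁_eq_zero hherm hskew hgau
  refine ⟨ricci₁_eq_neg_conj hherm hskew hgau, hric₁, fun i j => ?_, fun i j => ?_⟩
  · show ricci₂ R i j = 0
    simpa [hric₁] using ricci₂_eq_neg_ricci₁ hskew i j
  · show ricci₃ R i j = 0
    simpa [← hgau, hric₁] using ricci₃_eq_neg hskew i j

open Finset in
theorem vanishing_ricci_of_zero_rbc (n : ℕ) (hn : 1 ≤ n) (c : ℝ)
    (R : Fin n → Fin n → Fin n → Fin n → ℂ)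
    (hherm : ∀ i j k l : Fin n, R i j k l = (starRingEnd ℂ) (R j i l k))
    (hconst : ∀ i j k l : Fin n, R i j k l + R k l i j =
      2 * (c : ℂ) * (if i = l then 1 else 0) * (if k = j then 1 else 0))
    (hgauduchon : ∀ i j : Fin n, ∑ k, (R i j k k - R k j i k) = 0)
    (hc : c = 0) :
    (∀ i j : Fin n, ∑ k, R i j k k = -(starRingEnd ℂ) (∑ k, R j i k k)) ∧
    (∀ i j : Fin n, ∑ k, R i j k k = 0) ∧
    (∀ i j : Fin n, ∑ k, R k k i j = 0) ∧
    (∀ i j : Fin n, ∑ k, R i k k j = 0) :=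
  vanishing_ricci_of_zero_rbc_general n c R hherm hconst hgauduchon hc
end

section
/- Let $R$ be a four-index complex array on $\{1,\dots,n\}^4$ satisfying the Kähler symmetry $R_{i\bar j k\bar\ell} = R_{k\bar j i\bar\ell} = R_{i \bar\ell k \bar j}$ and the Hermitian symmetry $R_{i\bar j k\bar\ell} = \overline{R_{j\bar i\ell\bar k}}$. If the holomorphic sectional curvature is positive, i.e. $\sum_{i,j,k,\ell} R_{i\bar j k\bar\ell} v_i\bar v_j v_k \bar v_\ell > 0$ for every nonzero $v \in \mathbb{C}^n$, then for every nonzero vector of nonnegative reals $(b_1,\dots,b_n)$ one has $\sum_{i,k} (R_{i\bar i k\bar k} + R_{i\bar k k\bar i})\, b_i^2 b_k^2 > 0$, and hence (using the Kähler symmetry $R_{i\bar k k\bar i} = R_{k \bar k i \bar i}$) one has $\sum_{i,k} R_{i\bar i k\bar k}\, b_i^2 b_k^2 > 0$, i.e. the real bisectional curvature in the standard frame with weights $a_i = b_i^2$ is positive. -/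
set_option maxHeartbeats 1000000

noncomputable def ee (t : ZMod 4) : ℂ := Complex.I ^ t.val

lemma Ipow_mod (m : ℕ) : Complex.I ^ m = Complex.I ^ (m % 4) := by
  conv_lhs => rw [← Nat.div_add_mod m 4]
  rw [pow_add, pow_mul, Complex.I_pow_four, one_pow, one_mul]

lemma ee_add (x y : ZMod 4) : ee (x + y) = ee x * ee y := by
  simp only [ee, ← pow_add, ZMod.val_add]
  exact (Ipow_mod _).symm

lemma ee_zero : ee 0 = 1 := rfl

lemma ee_ne_zero (t : ZMod 4) : ee t ≠ 0 := pow_ne_zero _ Complex.I_ne_zero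

lemma ee_conj (t : ZMod 4) : (starRingEnd ℂ) (ee t) = ee (-t) := by
  have h1 : ee (-t) * ee t = 1 := by rw [← ee_add, neg_add_cancel, ee_zero]
  have h2 : (starRingEnd ℂ) (ee t) * ee t = 1 := by
    rw [ee, map_pow, Complex.conj_I, ← mul_pow]
    rw [show -Complex.I * Complex.I = 1 by simp [Complex.I_mul_I], one_pow]
  exact mul_right_cancel₀ (ee_ne_zero t) (h2.trans h1.symm)

lemma ee_sum {ι : Type*} (s : Finset ι) (f : ι → ZMod 4) :
    ee (∑ x ∈ s, f x) = ∏ x ∈ s, ee (f x) := by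
  classical
  induction s using Finset.induction with
  | empty => simp [ee_zero]
  | insert _ _ h ih => rw [Finset.sum_insert h, Finset.prod_insert h, ee_add, ih]

lemma sum_ee (c : ZMod 4) : ∑ t : ZMod 4, ee (c * t) = if c = 0 then 4 else 0 := by
  have hexp : ∑ t : ZMod 4, ee (c * t) = ee (c*0) + ee (c*1) + ee (c*2) + ee (c*3) :=
    Fin.sum_univ_four _
  rw [hexp]
  have h4 : ∀ c : ZMod 4, c = 0 ∨ c = 1 ∨ c = 2 ∨ c = 3 := by decide
  rcases h4 c with rfl | rfl | rfl | rfl <;>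
    norm_num [ee, show (0:ZMod 4).val = 0 from rfl, show (1:ZMod 4).val = 1 from rfl,
      show (2:ZMod 4).val = 2 from rfl, show (3:ZMod 4).val = 3 from rfl,
      show (4:ZMod 4).val = 0 from rfl, show (6:ZMod 4).val = 2 from rfl,
      show (9:ZMod 4).val = 1 from rfl,
      show ((1:ZMod 4)) ≠ 0 from by decide,
      show ((2:ZMod 4)) ≠ 0 from by decide, show ((3:ZMod 4)) ≠ 0 from by decide,
      pow_succ, Complex.I_sq]

open Finset in
lemma char_sum {n : ℕ} (i j k l : Fin n) :
    ∑ s : Fin n → ZMod 4, ee (s i - s j + s k - s l)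
      = if (i = j ∧ k = l) ∨ (i = l ∧ k = j) then (4:ℂ)^n else 0 := by
  classical
  set c : Fin n → ZMod 4 := fun m =>
    (if m = i then 1 else 0) + (if m = k then 1 else 0)
      - (if m = j then 1 else 0) - (if m = l then 1 else 0) with hc
  have hlin : ∀ s : Fin n → ZMod 4, s i - s j + s k - s l = ∑ m, c m * s m := by
    intro s
    simp only [hc, add_mul, sub_mul, ite_mul, one_mul, zero_mul,
      Finset.sum_sub_distrib, Finset.sum_add_distrib, Finset.sum_ite_eq', mem_univ, if_pos]
    ring
  have step1 : ∑ s : Fin n → ZMod 4, ee (s i - s j + s k - s l)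
      = ∏ m, ∑ t : ZMod 4, ee (c m * t) := by
    rw [Finset.prod_univ_sum, ← Fintype.piFinset_univ]
    exact Finset.sum_congr rfl fun s _ => by rw [hlin s, ee_sum]
  rw [step1]
  by_cases hcond : (i = j ∧ k = l) ∨ (i = l ∧ k = j)
  · have hz : ∀ m, c m = 0 := by
      intro m
      rcases hcond with ⟨rfl, rfl⟩ | ⟨rfl, rfl⟩ <;> simp [hc] <;> ring
    rw [if_pos hcond]
    calc ∏ m, ∑ t : ZMod 4, ee (c m * t) = ∏ _m : Fin n, (4:ℂ) := by
          refine Finset.prod_congr rfl fun m _ => ?_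
          rw [sum_ee, if_pos (hz m)]
      _ = (4:ℂ)^n := by simp
  · rw [if_neg hcond]
    have hw : ∃ m, c m ≠ 0 := by
      by_cases hij : i = j
      · have hkl : k ≠ l := fun h => hcond (Or.inl ⟨hij, h⟩)
        subst hij
        refine ⟨k, ?_⟩
        simp [hc, hkl]
        decide
      · by_cases hil : i = l
        · have hkj : k ≠ j := fun h => hcond (Or.inr ⟨hil, h⟩)
          subst hil
          refine ⟨k, ?_⟩
          simp [hc, hkj]
          decide
        · refine ⟨i, ?_⟩
          by_cases hik : i = k
          · subst hik
            simp [hc, hij, hil]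
            decide
          · simp [hc, hij, hil, hik]
            decide
    obtain ⟨m, hm⟩ := hw
    exact Finset.prod_eq_zero (mem_univ m) (by rw [sum_ee, if_neg hm])

lemma sum_if_const {ι M : Type*} [AddCommMonoid M] (s : Finset ι) (P : Prop) [Decidable P]
    (f : ι → M) : (∑ x ∈ s, if P then f x else 0) = if P then ∑ x ∈ s, f x else 0 := by
  split_ifs <;> simp

lemma ite_split {α : Type*} [DecidableEq α] (i j k l : α) (X c : ℂ) :
    X * (if (i = j ∧ k = l) ∨ (i = l ∧ k = j) then c else 0)
      = (if l = k then (if j = i then X * c else 0) else 0)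
      + (if l = i then (if j = k then X * c else 0) else 0)
      - (if l = k then (if j = i then (if l = i then X * c else 0) else 0) else 0) := by
  by_cases h1 : i = j <;> by_cases h2 : k = l <;> by_cases h3 : i = l <;> by_cases h4 : k = j <;>
    split_ifs <;>
    first
      | exact absurd ‹l = i›.symm h3
      | exact absurd ‹l = k›.symm h2
      | exact absurd ‹j = k›.symm h4
      | exact absurd (h1.symm.trans (h3.trans h2.symm)) ‹¬j = k›
      | tauto
      | (subst_vars; simp_all; try ring)
      | ring

open Finset in
theorem kahler_like_H_pos_implies_rbc_pos (n : ℕ) (hn : 1 ≤ n)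
    (R : Fin n → Fin n → Fin n → Fin n → ℂ)
    (hsym1 : ∀ i j k l : Fin n, R i j k l = R k j i l)
    (hsym2 : ∀ i j k l : Fin n, R i j k l = R i l k j)
    (hherm : ∀ i j k l : Fin n, R i j k l = (starRingEnd ℂ) (R j i l k))
    (hH : ∀ v : Fin n → ℂ, v ≠ 0 →
      0 < (∑ i, ∑ j, ∑ k, ∑ l,
        R i j k l * v i * (starRingEnd ℂ) (v j) * v k * (starRingEnd ℂ) (v l)).re) :
    ∀ b : Fin n → ℝ, (∀ i, 0 ≤ b i) → b ≠ 0 →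
      (0 < (∑ i, ∑ k, (R i i k k + R i k k i) * (b i : ℂ) ^ 2 * (b k : ℂ) ^ 2).re) ∧
      (0 < (∑ i, ∑ k, R i i k k * (b i : ℂ) ^ 2 * (b k : ℂ) ^ 2).re) := by
  intro b hb hbne
  classical
  -- diagonal positivity
  have hdiag : ∀ i, 0 < (R i i i i).re := by
    intro i
    have hne : (fun m => if m = i then (1:ℂ) else 0) ≠ 0 := by
      intro h
      have := congrFun h i
      simp at this
    have h := hH _ hne
    simpa [apply_ite (starRingEnd ℂ), mul_ite, ite_mul, mul_zero, zero_mul, mul_one,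
      Finset.sum_ite_eq', mem_univ] using h
  -- the averaging vectors
  set v : (Fin n → ZMod 4) → Fin n → ℂ := fun s m => ee (s m) * (b m : ℂ) with hv
  obtain ⟨i0, hi0⟩ : ∃ i, b i ≠ 0 := by
    by_contra h
    push_neg at h
    exact hbne (funext fun i => h i)
  have hvne : ∀ s, v s ≠ 0 := by
    intro s h
    have := congrFun h i0
    simp only [hv, Pi.zero_apply, mul_eq_zero] at this
    rcases this with h' | h'
    · exact ee_ne_zero _ h'
    · exact hi0 (by exact_mod_cast h')
  -- the main averaging identity
  have hmain : ∑ s : Fin n → ZMod 4,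
      (∑ i, ∑ j, ∑ k, ∑ l,
        R i j k l * v s i * (starRingEnd ℂ) (v s j) * v s k * (starRingEnd ℂ) (v s l))
      = (4:ℂ)^n * ((∑ i, ∑ k, (R i i k k + R i k k i) * (b i : ℂ) ^ 2 * (b k : ℂ) ^ 2)
          - ∑ i, R i i i i * (b i : ℂ) ^ 4) := by
    have stepA : ∀ s : Fin n → ZMod 4,
        (∑ i, ∑ j, ∑ k, ∑ l,
          R i j k l * v s i * (starRingEnd ℂ) (v s j) * v s k * (starRingEnd ℂ) (v s l))
        = ∑ i, ∑ j, ∑ k, ∑ l,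
            (R i j k l * ((b i : ℂ) * (b j : ℂ) * (b k : ℂ) * (b l : ℂ)))
              * ee (s i - s j + s k - s l) := by
      intro s
      refine Finset.sum_congr rfl fun i _ => Finset.sum_congr rfl fun j _ =>
        Finset.sum_congr rfl fun k _ => Finset.sum_congr rfl fun l _ => ?_
      simp only [hv, map_mul, Complex.conj_ofReal, ee_conj]
      rw [show s i - s j + s k - s l = s i + -s j + (s k + -s l) by ring,
        ee_add, ee_add, ee_add]
      ring
    calc ∑ s : Fin n → ZMod 4,
          (∑ i, ∑ j, ∑ k, ∑ l,
            R i j k l * v s i * (starRingEnd ℂ) (v s j) * v s k * (starRingEnd ℂ) (v s l))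
        = ∑ i, ∑ j, ∑ k, ∑ l,
            (R i j k l * ((b i : ℂ) * (b j : ℂ) * (b k : ℂ) * (b l : ℂ)))
              * ∑ s : Fin n → ZMod 4, ee (s i - s j + s k - s l) := by
          rw [Finset.sum_congr rfl fun s _ => stepA s, Finset.sum_comm]
          refine Finset.sum_congr rfl fun i _ => ?_
          rw [Finset.sum_comm]
          refine Finset.sum_congr rfl fun j _ => ?_
          rw [Finset.sum_comm]
          refine Finset.sum_congr rfl fun k _ => ?_
          rw [Finset.sum_comm]
          refine Finset.sum_congr rfl fun l _ => ?_
          rw [← Finset.mul_sum]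
      _ = ∑ i, ∑ j, ∑ k, ∑ l,
            ((if l = k then (if j = i then
                (R i j k l * ((b i : ℂ) * (b j : ℂ) * (b k : ℂ) * (b l : ℂ))) * (4:ℂ)^n
              else 0) else 0)
            + (if l = i then (if j = k then
                (R i j k l * ((b i : ℂ) * (b j : ℂ) * (b k : ℂ) * (b l : ℂ))) * (4:ℂ)^n
              else 0) else 0)
            - (if l = k then (if j = i then (if l = i then
                (R i j k l * ((b i : ℂ) * (b j : ℂ) * (b k : ℂ) * (b l : ℂ))) * (4:ℂ)^n
              else 0) else 0) else 0)) := by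
          refine Finset.sum_congr rfl fun i _ => Finset.sum_congr rfl fun j _ =>
            Finset.sum_congr rfl fun k _ => Finset.sum_congr rfl fun l _ => ?_
          rw [char_sum i j k l]
          exact ite_split i j k l _ _
      _ = (4:ℂ)^n * ((∑ i, ∑ k, (R i i k k + R i k k i) * (b i : ℂ) ^ 2 * (b k : ℂ) ^ 2)
            - ∑ i, R i i i i * (b i : ℂ) ^ 4) := by
          simp only [Finset.sum_add_distrib, Finset.sum_sub_distrib,
            Finset.sum_ite_eq, Finset.sum_ite_eq', sum_if_const, Finset.mem_univ, if_true]
          rw [mul_sub, Finset.mul_sum, Finset.mul_sum, ← Finset.sum_add_distrib]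
          congr 1
          · refine Finset.sum_congr rfl fun i _ => ?_
            rw [Finset.mul_sum, ← Finset.sum_add_distrib]
            refine Finset.sum_congr rfl fun k _ => ?_
            ring
          · refine Finset.sum_congr rfl fun i _ => ?_
            ring
  -- positivity of the total average
  have hsum_pos : 0 < ((4:ℂ)^n * ((∑ i, ∑ k, (R i i k k + R i k k i)
      * (b i : ℂ) ^ 2 * (b k : ℂ) ^ 2) - ∑ i, R i i i i * (b i : ℂ) ^ 4)).re := by
    rw [← hmain, Complex.re_sum]
    exact Finset.sum_pos (fun s _ => hH (v s) (hvne s)) Finset.univ_nonempty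
  have hre4 : ∀ z : ℂ, ((4:ℂ)^n * z).re = (4:ℝ)^n * z.re := by
    intro z
    rw [show (4:ℂ)^n = (((4:ℝ)^n : ℝ) : ℂ) by push_cast; ring, Complex.re_ofReal_mul]
  have hDre : 0 ≤ (∑ i, R i i i i * (b i : ℂ) ^ 4).re := by
    rw [Complex.re_sum]
    refine Finset.sum_nonneg fun i _ => ?_
    rw [show ((b i : ℂ)) ^ 4 = ((b i ^ 4 : ℝ) : ℂ) by push_cast; ring]
    rw [show R i i i i * ((b i ^ 4 : ℝ) : ℂ) = ((b i ^ 4 : ℝ) : ℂ) * R i i i i by ring,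
      Complex.re_ofReal_mul]
    exact mul_nonneg (pow_nonneg (hb i) 4) (hdiag i).le
  have h4pos : (0:ℝ) < (4:ℝ)^n := by positivity
  have hS1 : 0 < (∑ i, ∑ k, (R i i k k + R i k k i) * (b i : ℂ) ^ 2 * (b k : ℂ) ^ 2).re := by
    rw [hre4, Complex.sub_re] at hsum_pos
    nlinarith
  refine ⟨hS1, ?_⟩
  have h2 : (∑ i, ∑ k, (R i i k k + R i k k i) * (b i : ℂ) ^ 2 * (b k : ℂ) ^ 2)
      = 2 * ∑ i, ∑ k, R i i k k * (b i : ℂ) ^ 2 * (b k : ℂ) ^ 2 := by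
    rw [Finset.mul_sum]
    refine Finset.sum_congr rfl fun i _ => ?_
    rw [Finset.mul_sum]
    refine Finset.sum_congr rfl fun k _ => ?_
    rw [hsym2 i k k i]
    ring
  rw [h2] at hS1
  have : ((2:ℂ) * ∑ i, ∑ k, R i i k k * (b i : ℂ) ^ 2 * (b k : ℂ) ^ 2).re
      = 2 * (∑ i, ∑ k, R i i k k * (b i : ℂ) ^ 2 * (b k : ℂ) ^ 2).re := by
    simp [Complex.mul_re]
  rw [this] at hS1
  linarith
end

section
/- Let $n \geq 2$ and $0 < \varepsilon < 1$. The curvature array $R_{i\bar j k\bar\ell} = \delta_{ij}\delta_{k\ell} - (2-\varepsilon)\delta_{i\ell}\delta_{kj}$ (the negative of the array from Example 2.2) has: (1) negative holomorphic sectional curvature: $\sum R_{i\bar j k\bar\ell} v_i\bar v_j v_k\bar v_\ell = -(1-\varepsilon)|v|^4 < 0$ for all nonzero $v \in \mathbb{C}^n$; (2) real bisectional curvature not nonpositive: with $a_1=\cdots=a_n = 1/\sqrt n$ in the standard unitary frame, $\sum_{i,j} R_{i\bar i j\bar j} a_i a_j = n - 2 + \varepsilon > 0$. -/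
/-!
Both Kronecker terms of `R` contract against `v ⊗ v̄ ⊗ v ⊗ v̄` to `|v|⁴`, so the holomorphic
sectional form is `(1 - (2 - ε)) |v|⁴`. On the diagonal `R i i j j` the two terms contract
instead to `(∑ aᵢ)²` and `∑ aᵢ²`, which for the unit vector with equal entries `1/√n` are `n`
and `1`.
-/

open Finset

section KroneckerArray

variable {ι : Type*} [Fintype ι]

theorem sum_mul_conj_eq_ofReal_sum_norm_sq (v : ι → ℂ) :
    ∑ i, v i * starRingEnd ℂ (v i) = ((∑ i, ‖v i‖ ^ 2 : ℝ) : ℂ) := by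
  push_cast
  exact sum_congr rfl fun i _ => Complex.mul_conj' (v i)

theorem sum_norm_sq_pos_of_ne_zero {v : ι → ℂ} (hv : v ≠ 0) : 0 < ∑ i, ‖v i‖ ^ 2 := by
  obtain ⟨i, hi⟩ := Function.ne_iff.mp hv
  exact sum_pos' (fun j _ => by positivity) ⟨i, mem_univ i, by positivity⟩

theorem sum_sq_eq_one_of_forall_eq_inv_sqrt_card [Nonempty ι] {a : ι → ℝ}
    (ha : ∀ i, a i = 1 / √(Fintype.card ι)) : ∑ i, a i ^ 2 = 1 := by
  have hcard : (0 : ℝ) < Fintype.card ι := by exact_mod_cast Fintype.card_pos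
  simp only [ha, sum_const, card_univ, nsmul_eq_mul, div_pow, one_pow,
    Real.sq_sqrt hcard.le]
  exact mul_one_div_cancel hcard.ne'

theorem sq_sum_eq_card_of_forall_eq_inv_sqrt_card {a : ι → ℝ}
    (ha : ∀ i, a i = 1 / √(Fintype.card ι)) : (∑ i, a i) ^ 2 = Fintype.card ι := by
  simp only [ha, sum_const, card_univ, nsmul_eq_mul, mul_pow, div_pow, one_pow,
    Real.sq_sqrt (Nat.cast_nonneg _)]
  rcases (Nat.cast_nonneg (α := ℝ) (Fintype.card ι)).eq_or_lt with h | h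
  · simp [← h]
  · field_simp

variable [DecidableEq ι] {R : ι → ι → ι → ι → ℂ} {c : ℂ}

theorem quartic_form_eq_of_kronecker
    (hR : ∀ i j k l, R i j k l =
      (if i = j then 1 else 0) * (if k = l then 1 else 0)
        - c * (if i = l then 1 else 0) * (if k = j then 1 else 0))
    (v : ι → ℂ) :
    ∑ i, ∑ j, ∑ k, ∑ l, R i j k l * v i * starRingEnd ℂ (v j) * v k * starRingEnd ℂ (v l)
      = (1 - c) * ((∑ i, ‖v i‖ ^ 2 : ℝ) : ℂ) ^ 2 := by
  rw [← sum_mul_conj_eq_ofReal_sum_norm_sq]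
  simp only [hR, sub_mul, ite_mul, mul_ite, one_mul, zero_mul, mul_zero, mul_one,
    sum_sub_distrib, sum_ite_irrel, sum_const_zero, sum_ite_eq, sum_ite_eq', mem_univ, if_true]
  rw [sq, sum_mul_sum]
  simp only [mul_sum]
  congr 1 <;> exact sum_congr rfl fun i _ => sum_congr rfl fun j _ => by ring

theorem diagonal_form_eq_of_kronecker
    (hR : ∀ i j k l, R i j k l =
      (if i = j then 1 else 0) * (if k = l then 1 else 0)
        - c * (if i = l then 1 else 0) * (if k = j then 1 else 0))
    (x : ι → ℂ) :
    ∑ i, ∑ j, R i i j j * x i * x j = (∑ i, x i) ^ 2 - c * ∑ i, x i ^ 2 := by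
  simp only [hR, sub_mul, ite_mul, mul_ite, one_mul, zero_mul, mul_zero, mul_one,
    sum_sub_distrib, sum_ite_eq', mem_univ, if_true]
  rw [sq, sum_mul_sum, mul_sum]
  congr 1
  exact sum_congr rfl fun i _ => by ring

end KroneckerArray

open Finset in
theorem example_2_2_negative_version (n : ℕ) (hn : 2 ≤ n) (ε : ℝ) (hε0 : 0 < ε) (hε1 : ε < 1)
    (R : Fin n → Fin n → Fin n → Fin n → ℂ)
    (hR : ∀ i j k l : Fin n, R i j k l =
      (if i = j then 1 else 0) * (if k = l then 1 else 0)
      - (2 - (ε : ℂ)) * (if i = l then 1 else 0) * (if k = j then 1 else 0)) :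
    (∀ v : Fin n → ℂ, v ≠ 0 →
      ∑ i, ∑ j, ∑ k, ∑ l, R i j k l * v i * (starRingEnd ℂ) (v j) * v k * (starRingEnd ℂ) (v l)
        = ((-(1 - ε) * (∑ i, ‖v i‖ ^ 2) ^ 2 : ℝ) : ℂ) ∧
      (-(1 - ε) * (∑ i, ‖v i‖ ^ 2) ^ 2 : ℝ) < 0) ∧
    (∀ a : Fin n → ℝ, (∀ i, a i = 1 / Real.sqrt n) →
      (∑ i, ∑ j, R i i j j * (a i : ℂ) * (a j : ℂ)) = (((n : ℝ) - 2 + ε : ℝ) : ℂ)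
        ∧ (0 : ℝ) < (n : ℝ) - 2 + ε) := by
  refine ⟨fun v hv => ⟨?_, ?_⟩, fun a ha => ⟨?_, ?_⟩⟩
  · rw [quartic_form_eq_of_kronecker hR]
    push_cast
    ring
  · exact mul_neg_of_neg_of_pos (by linarith) (pow_pos (sum_norm_sq_pos_of_ne_zero hv) 2)
  · have : NeZero n := ⟨by omega⟩
    replace ha : ∀ i, a i = 1 / √(Fintype.card (Fin n)) := by rwa [Fintype.card_fin]
    have hreal : (∑ i, a i) ^ 2 - (2 - ε) * ∑ i, a i ^ 2 = (n : ℝ) - 2 + ε := by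
      rw [sq_sum_eq_card_of_forall_eq_inv_sqrt_card ha,
        sum_sq_eq_one_of_forall_eq_inv_sqrt_card ha, Fintype.card_fin]
      ring
    rw [diagonal_form_eq_of_kronecker hR]
    exact_mod_cast hreal
  · have : (2 : ℝ) ≤ n := by exact_mod_cast hn
    linarith
end
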